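/- arXiv:2107.13086 — 4 statements merged into one kernel-verified Lean document; each statement's English description precedes it below -/
import Mathlib

section
/- Let η be the infinite sequence of rationals in [0,1] formed by concatenating, over the primes p = 2, 3, 5, 7, ... in increasing order, the blocks (1⁻¹ mod p)/p, (2⁻¹ mod p)/p, ..., ((p−1)⁻¹ mod p)/p. Then η is equidistributed in [0,1]: for every subinterval J ⊆ [0,1], the proportion of the first N terms of η lying in J converges to the length of J as N → ∞. -/
open Filter Finset
open scoped BigOperators Classical

/-- `starCount ξ N r` = number of indices `n` with `1 ≤ n ≤ N` and `ξ n ∈ [0, r]`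
(counted with multiplicity). -/
noncomputable def starCount (ξ : ℕ → ℝ) (N : ℕ) (r : ℝ) : ℕ :=
  ((Finset.Icc 1 N).filter (fun n => ξ n ∈ Set.Icc (0 : ℝ) r)).card

/-- Star discrepancy of the first `N` terms of the sequence `ξ` (indexed from 1):
`D_N*(ξ) = sup_{0 < r ≤ 1} |A_N(ξ, r)/N − r|`. -/
noncomputable def starDisc (ξ : ℕ → ℝ) (N : ℕ) : ℝ :=
  sSup {d : ℝ | ∃ r : ℝ, 0 < r ∧ r ≤ 1 ∧ d = |(starCount ξ N r : ℝ) / (N : ℝ) - r|}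

/-- The `m`-th prime number, 1-indexed: `nthPrime 1 = 2`, `nthPrime 2 = 3`, … -/
noncomputable def nthPrime (m : ℕ) : ℕ := Nat.nth Nat.Prime (m - 1)

/-- `Psum m = ∑_{k=1}^m (p_k − 1)`, the number of terms in the first `m` blocks of `η`. -/
noncomputable def Psum (m : ℕ) : ℕ := ∑ k ∈ Finset.Icc 1 m, (nthPrime k - 1)

/-- `invMod j p` = the representative in `{0, …, p−1}` of `j⁻¹ (mod p)`. -/
noncomputable def invMod (j p : ℕ) : ℕ := ((j : ZMod p)⁻¹).val

/-- The sequence `η` (indexed from 1), obtained by concatenating over the primes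
`p = 2, 3, 5, …` the blocks `(j⁻¹ mod p)/p` for `j = 1, …, p−1`.
For `n ≥ 1`, if `m` is minimal with `n ≤ Psum (m+1)` (so `Psum m < n ≤ Psum (m+1)`),
then `η n` is the `(n − Psum m)`-th element of the block for the prime `nthPrime (m+1)`. -/
noncomputable def eta (n : ℕ) : ℝ :=
  if h : ∃ m, n ≤ Psum (m + 1) then
    (invMod (n - Psum (Nat.find h)) (nthPrime (Nat.find h + 1)) : ℝ) /
      (nthPrime (Nat.find h + 1) : ℝ)
  else 0

-- (s+1)^2 ≤ 2^(s+2)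
lemma sq_le_two_pow : ∀ s : ℕ, (s+1)^2 ≤ 2^(s+2) := by
  intro s
  induction s using Nat.strong_induction_on with
  | _ s ih =>
    match s with
    | 0 => norm_num
    | 1 => norm_num
    | 2 => norm_num
    | (t+3) =>
      have h : (t+3)^2 ≤ 2^(t+4) := by
        have h0 := ih (t+2) (by omega)
        have e1 : t+2+1 = t+3 := by omega
        have e2 : t+2+2 = t+4 := by omega
        rwa [e1, e2] at h0
      have h2 : (t+4)^2 ≤ 2*(t+3)^2 := by nlinarith [sq_nonneg t, Nat.zero_le t]
      calc (t+4)^2 ≤ 2*(t+3)^2 := h2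
        _ ≤ 2*2^(t+4) := Nat.mul_le_mul_left 2 h
        _ = 2^(t+5) := by ring

-- Chebyshev-type: central binom bound on prime count
lemma four_pow_le_pow_count (n : ℕ) (hn : 0 < n) :
    4^n ≤ (2*n)^(Nat.count Nat.Prime (2*n+1) + 1) := by
  have h1 : 4^n ≤ 2*n * Nat.centralBinom n := Nat.four_pow_le_two_mul_self_mul_centralBinom n hn
  have hcb : Nat.centralBinom n ≠ 0 := (Nat.centralBinom_pos n).ne'
  have hfact : (Nat.centralBinom n).factorization.prod (fun p k => p ^ k) = Nat.centralBinom n :=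
    Nat.factorization_prod_pow_eq_self hcb
  set S := (Nat.centralBinom n).factorization.support with hS
  have hsub : S ⊆ (Finset.range (2*n+1)).filter Nat.Prime := by
    intro p hp
    have hple : p ^ (Nat.centralBinom n).factorization p ≤ 2*n := by
      unfold Nat.centralBinom
      exact Nat.pow_factorization_choose_le (by omega)
    have hν : (Nat.centralBinom n).factorization p ≠ 0 := Finsupp.mem_support_iff.mp hp
    have hprime : p.Prime := by
      rw [hS, Nat.support_factorization] at hp
      exact Nat.prime_of_mem_primeFactors hp
    have : p ≤ 2*n := le_trans (Nat.le_self_pow hν p) hple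
    simp [Finset.mem_filter, Finset.mem_range]
    exact ⟨by omega, hprime⟩
  have hprod : Nat.centralBinom n ≤ (2*n)^S.card := by
    rw [← hfact]
    rw [Finsupp.prod]
    calc ∏ p ∈ S, p ^ (Nat.centralBinom n).factorization p
        ≤ ∏ p ∈ S, (2*n) := by
          apply Finset.prod_le_prod
          · intro i _; positivity
          · intro p hp
            unfold Nat.centralBinom
            exact Nat.pow_factorization_choose_le (by omega)
      _ = (2*n)^S.card := by rw [Finset.prod_const]
  have hcard : S.card ≤ Nat.count Nat.Prime (2*n+1) := by
    rw [Nat.count_eq_card_filter_range]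
    exact Finset.card_le_card hsub
  calc 4^n ≤ 2*n * Nat.centralBinom n := h1
    _ ≤ 2*n * (2*n)^S.card := by exact Nat.mul_le_mul_left _ hprod
    _ = (2*n)^(S.card + 1) := by ring
    _ ≤ (2*n)^(Nat.count Nat.Prime (2*n+1) + 1) := Nat.pow_le_pow_right (by omega) (by omega)

-- p_m ≤ 2(m+1)(sqrt m + 4)
lemma nth_prime_le (m : ℕ) : Nat.nth Nat.Prime m ≤ 2*(m+1)*(Nat.sqrt m + 4) := by
  set t := Nat.sqrt m + 4 with ht
  set n := (m+1)*t with hn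
  have hn0 : 0 < n := by positivity
  -- key: 2n ≤ 2^(2t-1)
  have hkey : 2*n ≤ 2^(2*t-1) := by
    have hs : Nat.sqrt m + 4 = t := rfl
    set s0 := Nat.sqrt m with hs0
    have h1 : m + 1 ≤ (s0+1)^2 := by
      have := Nat.lt_succ_sqrt m
      nlinarith [Nat.lt_succ_sqrt m]
    have h2 : (s0+1)^2 ≤ 2^(s0+2) := sq_le_two_pow s0
    have h4 : 2*n = 2*(m+1)*t := by rw [hn]; ring
    have h5 : 2*t - 1 = 2*s0 + 7 := by omega
    have h6 : t ≤ 4*(s0+1) := by omega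
    have : 2*(m+1)*t ≤ 2*(s0+1)^2*(4*(s0+1)) := by
      apply Nat.mul_le_mul
      · exact Nat.mul_le_mul_left 2 h1
      · exact h6
    have h7 : 2*(s0+1)^2*(4*(s0+1)) ≤ 8*(s0+1)^4 := by nlinarith [Nat.zero_le s0]
    have h8 : (s0+1)^4 ≤ (2^(s0+2))^2 := by
      calc (s0+1)^4 = ((s0+1)^2)^2 := by ring
        _ ≤ (2^(s0+2))^2 := Nat.pow_le_pow_left h2 2
    have h9 : (2^(s0+2))^2 = 2^(2*s0+4) := by rw [← pow_mul]; ring_nf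
    calc 2*n = 2*(m+1)*t := h4
      _ ≤ 8*(s0+1)^4 := le_trans this h7
      _ ≤ 8*2^(2*s0+4) := Nat.mul_le_mul_left 8 (h9 ▸ h8)
      _ = 2^(2*s0+7) := by ring
      _ = 2^(2*t-1) := by rw [h5]
  -- suppose count ≤ m, derive contradiction
  by_contra hcon
  push_neg at hcon
  have hK : Nat.count Nat.Prime (2*n+1) ≤ m := by
    by_contra hK
    push_neg at hK
    have h2 := Nat.nth_lt_of_lt_count hK
    have h3 : 2*((m+1)*t) = 2*(m+1)*t := by ring
    omega
  have h1 : 4^n ≤ (2*n)^(m+1) := le_trans (four_pow_le_pow_count n hn0)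
    (Nat.pow_le_pow_right (by omega) (by omega))
  have h2 : (2*n)^(m+1) ≤ (2^(2*t-1))^(m+1) := Nat.pow_le_pow_left hkey _
  have h3 : (2^(2*t-1))^(m+1) = 2^((2*t-1)*(m+1)) := by rw [← pow_mul]
  have h4 : (4:ℕ)^n = 2^(2*n) := by
    rw [show (4:ℕ) = 2^2 by norm_num, ← pow_mul]
  have h5 : (2*t-1)*(m+1) < 2*n := by
    have : 2*n = 2*t*(m+1) := by rw [hn]; ring
    have ht1 : 1 ≤ t := by omega
    have hm1 : 1 ≤ m+1 := by omega
    calc (2*t-1)*(m+1) < 2*t*(m+1) :=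
          (Nat.mul_lt_mul_right (by omega : 0 < m+1)).mpr (by omega)
      _ = 2*n := this.symm
  have : 2^(2*n) ≤ 2^((2*t-1)*(m+1)) := by
    rw [← h4, ← h3]; exact le_trans h1 h2
  have := Nat.pow_le_pow_iff_right (le_refl 2) |>.mp this
  omega

lemma nthPrime_succ (m : ℕ) : nthPrime (m+1) = Nat.nth Nat.Prime m := by simp [nthPrime]

lemma two_le_pr (m : ℕ) : m + 2 ≤ Nat.nth Nat.Prime m := Nat.add_two_le_nth_prime m

lemma psum_succ (m : ℕ) : Psum (m+1) = Psum m + (Nat.nth Nat.Prime m - 1) := by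
  unfold Psum
  rw [Finset.sum_Icc_succ_top (by omega : 1 ≤ m+1), nthPrime_succ]

lemma psum_zero : Psum 0 = 0 := by simp [Psum]

lemma psum_mono : Monotone Psum :=
  monotone_nat_of_le_succ fun m => by rw [psum_succ]; omega

lemma psum_lt_succ (m : ℕ) : Psum m < Psum (m+1) := by
  have := two_le_pr m
  rw [psum_succ]; omega

lemma le_psum (m : ℕ) : m ≤ Psum m := by
  induction m with
  | zero => simp [psum_zero]
  | succ m ih =>
    have := psum_lt_succ m
    omega

lemma sq_le_two_psum (m : ℕ) : m * m ≤ 2 * Psum m := by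
  have h1 : ∑ k ∈ Finset.Icc 1 m, k ≤ Psum m := by
    apply Finset.sum_le_sum
    intro k hk
    simp only [Finset.mem_Icc] at hk
    have h2 : k - 1 + 2 ≤ Nat.nth Nat.Prime (k-1) := two_le_pr (k-1)
    unfold nthPrime
    omega
  have h2 : (∑ k ∈ Finset.Icc 1 m, k) * 2 = m * (m+1) := by
    clear h1
    induction m with
    | zero => simp
    | succ m ih =>
      rw [Finset.sum_Icc_succ_top (by omega : 1 ≤ m+1), add_mul, ih]
      ring
  nlinarith
lemma exists_le_psum (n : ℕ) : ∃ m, n ≤ Psum (m+1) :=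
  ⟨n, le_trans (by omega) (le_psum (n+1))⟩

lemma find_eq (m n : ℕ) (h1 : Psum m < n) (h2 : n ≤ Psum (m+1)) :
    Nat.find (exists_le_psum n) = m := by
  rw [Nat.find_eq_iff]
  refine ⟨h2, fun k hk hle => ?_⟩
  have : Psum (k+1) ≤ Psum m := psum_mono (by omega)
  omega

lemma eta_eq (m n : ℕ) (h1 : Psum m < n) (h2 : n ≤ Psum (m+1)) :
    eta n = (invMod (n - Psum m) (Nat.nth Nat.Prime m) : ℝ) / (Nat.nth Nat.Prime m : ℝ) := by
  have hex : ∃ k, n ≤ Psum (k+1) := exists_le_psum n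
  rw [eta, dif_pos hex, find_eq m n h1 h2, nthPrime_succ]

lemma invMod_mem {p : ℕ} (hp : p.Prime) {j : ℕ} (h1 : 1 ≤ j) (h2 : j ≤ p - 1) :
    1 ≤ invMod j p ∧ invMod j p ≤ p - 1 := by
  haveI : Fact p.Prime := ⟨hp⟩
  have hp2 := hp.two_le
  have hj0 : (j : ZMod p) ≠ 0 := by
    rw [Ne, ZMod.natCast_eq_zero_iff]
    intro hdvd
    have := Nat.le_of_dvd (by omega) hdvd
    omega
  have hinv : (j : ZMod p)⁻¹ ≠ 0 := inv_ne_zero hj0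
  have hval0 : invMod j p ≠ 0 := by
    unfold invMod
    rw [Ne, ZMod.val_eq_zero]
    exact hinv
  have hvallt : invMod j p < p := ZMod.val_lt _
  omega

lemma invMod_invMod {p : ℕ} (hp : p.Prime) {j : ℕ} (h1 : 1 ≤ j) (h2 : j ≤ p - 1) :
    invMod (invMod j p) p = j := by
  haveI : Fact p.Prime := ⟨hp⟩
  have hp2 := hp.two_le
  unfold invMod
  rw [ZMod.natCast_rightInverse _]
  rw [inv_inv]
  exact ZMod.val_cast_of_lt (by omega)

lemma interval_card_bound {p : ℕ} (hp2 : 2 ≤ p) {a b : ℝ} (ha : 0 ≤ a) (hab : a ≤ b) (hb : b ≤ 1) :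
    |(((Finset.Icc 1 (p-1)).filter (fun i : ℕ => (i:ℝ)/(p:ℝ) ∈ Set.Icc a b)).card : ℝ) - (b-a)*p| ≤ 3 := by
  set S := (Finset.Icc 1 (p-1)).filter (fun i : ℕ => (i:ℝ)/(p:ℝ) ∈ Set.Icc a b) with hS
  have hppos : (0:ℝ) < p := by positivity
  have hmem : ∀ i : ℕ, i ∈ S ↔ (1 ≤ i ∧ i ≤ p - 1) ∧ a * p ≤ (i:ℝ) ∧ (i:ℝ) ≤ b * p := by
    intro i
    rw [hS, Finset.mem_filter, Finset.mem_Icc, Set.mem_Icc]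
    constructor
    · rintro ⟨⟨hi1, hi2⟩, hi3, hi4⟩
      exact ⟨⟨hi1, hi2⟩, (le_div_iff₀ hppos).mp hi3, (div_le_iff₀ hppos).mp hi4⟩
    · rintro ⟨⟨hi1, hi2⟩, hi3, hi4⟩
      exact ⟨⟨hi1, hi2⟩, (le_div_iff₀ hppos).mpr hi3, (div_le_iff₀ hppos).mpr hi4⟩
  -- upper bound
  have hup : (S.card : ℝ) ≤ (b-a)*p + 1 := by
    have hsub : S ⊆ Finset.Icc ⌈a*p⌉₊ ⌊b*p⌋₊ := by
      intro i hi
      rw [hmem] at hi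
      rw [Finset.mem_Icc]
      exact ⟨Nat.ceil_le.mpr hi.2.1, Nat.le_floor hi.2.2⟩
    have h1 : S.card ≤ ⌊b*p⌋₊ + 1 - ⌈a*p⌉₊ := by
      have := Finset.card_le_card hsub
      rwa [Nat.card_Icc] at this
    rcases le_or_gt ⌈a*p⌉₊ (⌊b*p⌋₊ + 1) with hc | hc
    · have h2 : (S.card : ℝ) ≤ (⌊b*p⌋₊ : ℝ) + 1 - (⌈a*p⌉₊ : ℝ) := by
        have := (Nat.cast_le (α := ℝ)).mpr h1
        rwa [Nat.cast_sub hc, Nat.cast_add, Nat.cast_one] at this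
      have h3 : (⌊b*p⌋₊ : ℝ) ≤ b*p := Nat.floor_le (by nlinarith)
      have h4 : a*p ≤ (⌈a*p⌉₊ : ℝ) := Nat.le_ceil _
      nlinarith
    · have : ⌊b*p⌋₊ + 1 - ⌈a*p⌉₊ = 0 := by omega
      have hz : S.card = 0 := by omega
      rw [hz]
      have : 0 ≤ (b-a)*p := by nlinarith
      simp
      nlinarith
  -- lower bound
  have hlow : (b-a)*p - 3 ≤ (S.card : ℝ) := by
    set u := ⌊a*p⌋₊ with hu
    set v := min (p-1) ⌊b*p⌋₊ with hv
    have hsub : Finset.Icc (u+1) v ⊆ S := by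
      intro i hi
      rw [Finset.mem_Icc] at hi
      rw [hmem]
      have hi1 : a*p < (i:ℝ) := by
        have h5 : a*p < (u:ℝ) + 1 := Nat.lt_floor_add_one _
        have : (u:ℝ) + 1 ≤ (i:ℝ) := by exact_mod_cast hi.1
        linarith
      have hi2 : (i:ℝ) ≤ b*p := by
        have h6 : i ≤ ⌊b*p⌋₊ := le_trans hi.2 (min_le_right _ _)
        exact le_trans (Nat.cast_le.mpr h6) (Nat.floor_le (by nlinarith))
      exact ⟨⟨by omega, le_trans hi.2 (min_le_left _ _)⟩, hi1.le, hi2⟩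
    have hcard : v - u ≤ S.card := by
      have := Finset.card_le_card hsub
      rwa [Nat.card_Icc, show v + 1 - (u+1) = v - u by omega] at this
    have hfl : ⌊b*p⌋₊ ≤ p := by
      apply Nat.floor_le_of_le
      nlinarith
    have hvge : (⌊b*p⌋₊ : ℝ) - 1 ≤ (v:ℝ) := by
      have : ⌊b*p⌋₊ - 1 ≤ v := by omega
      rcases Nat.eq_zero_or_pos ⌊b*p⌋₊ with h0 | h0
      · have hvnn : (0:ℝ) ≤ (v:ℝ) := Nat.cast_nonneg v
        rw [h0]; push_cast; linarith
      · have := (Nat.cast_le (α := ℝ)).mpr this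
        rw [Nat.cast_sub (by omega)] at this
        simpa using this
    have hbf : b*p - 1 < (⌊b*p⌋₊ : ℝ) := Nat.sub_one_lt_floor _
    have hule : (u:ℝ) ≤ a*p := Nat.floor_le (by positivity)
    have hcast : (v:ℝ) - (u:ℝ) ≤ ((v - u : ℕ) : ℝ) := by
      rcases le_total u v with h | h
      · rw [Nat.cast_sub h]
      · have : v - u = 0 := by omega
        rw [this]
        have := (Nat.cast_le (α := ℝ)).mpr h
        simpa using by linarith
    have := (Nat.cast_le (α := ℝ)).mpr hcard
    nlinarith
  rw [abs_le]
  constructor <;> linarith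

lemma block_card_eq (m : ℕ) (a b : ℝ) :
    ((Finset.Ioc (Psum m) (Psum (m+1))).filter (fun n => eta n ∈ Set.Icc a b)).card
      = ((Finset.Icc 1 (Nat.nth Nat.Prime m - 1)).filter
          (fun i : ℕ => (i:ℝ)/(Nat.nth Nat.Prime m : ℝ) ∈ Set.Icc a b)).card := by
  set p := Nat.nth Nat.Prime m with hpdef
  have hp : p.Prime := Nat.prime_nth_prime m
  have hp2 : 2 ≤ p := hp.two_le
  have hps : Psum (m+1) = Psum m + (p - 1) := psum_succ m
  apply Finset.card_bij' (fun n _ => invMod (n - Psum m) p) (fun i _ => Psum m + invMod i p)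
  · -- hi : maps into target
    intro n hn
    rw [Finset.mem_filter, Finset.mem_Ioc] at hn
    obtain ⟨⟨hn1, hn2⟩, hn3⟩ := hn
    have hj1 : 1 ≤ n - Psum m := by omega
    have hj2 : n - Psum m ≤ p - 1 := by omega
    have hmem := invMod_mem hp hj1 hj2
    rw [Finset.mem_filter, Finset.mem_Icc]
    refine ⟨⟨hmem.1, hmem.2⟩, ?_⟩
    rw [eta_eq m n hn1 hn2] at hn3
    exact hn3
  · -- hj : maps back
    intro i hi
    rw [Finset.mem_filter, Finset.mem_Icc] at hi
    obtain ⟨⟨hi1, hi2⟩, hi3⟩ := hi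
    have hmem := invMod_mem hp hi1 hi2
    rw [Finset.mem_filter, Finset.mem_Ioc]
    have hn1 : Psum m < Psum m + invMod i p := by omega
    have hn2 : Psum m + invMod i p ≤ Psum (m+1) := by omega
    refine ⟨⟨hn1, hn2⟩, ?_⟩
    rw [eta_eq m _ hn1 hn2]
    rw [show Psum m + invMod i p - Psum m = invMod i p by omega]
    rw [invMod_invMod hp hi1 hi2]
    exact hi3
  · -- left inverse
    intro n hn
    rw [Finset.mem_filter, Finset.mem_Ioc] at hn
    obtain ⟨⟨hn1, hn2⟩, _⟩ := hn
    have hj1 : 1 ≤ n - Psum m := by omega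
    have hj2 : n - Psum m ≤ p - 1 := by omega
    rw [invMod_invMod hp hj1 hj2]
    omega
  · -- right inverse
    intro i hi
    rw [Finset.mem_filter, Finset.mem_Icc] at hi
    obtain ⟨⟨hi1, hi2⟩, _⟩ := hi
    rw [show Psum m + invMod i p - Psum m = invMod i p by omega]
    exact invMod_invMod hp hi1 hi2

lemma psum_eq_sum_range (M : ℕ) : Psum M = ∑ k ∈ Finset.range M, (Nat.nth Nat.Prime k - 1) := by
  induction M with
  | zero => simp [psum_zero]
  | succ M ih => rw [psum_succ, Finset.sum_range_succ, ih]

lemma count_split (a b : ℝ) (M N : ℕ) (h : Psum M ≤ N) :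
    ((Finset.Icc 1 N).filter (fun n => eta n ∈ Set.Icc a b)).card
      = ((Finset.Icc 1 (Psum M)).filter (fun n => eta n ∈ Set.Icc a b)).card
        + ((Finset.Ioc (Psum M) N).filter (fun n => eta n ∈ Set.Icc a b)).card := by
  have hu : Finset.Icc 1 N = Finset.Icc 1 (Psum M) ∪ Finset.Ioc (Psum M) N := by
    ext x
    simp only [Finset.mem_Icc, Finset.mem_Ioc, Finset.mem_union]
    omega
  rw [hu, Finset.filter_union]
  apply Finset.card_union_of_disjoint
  rw [Finset.disjoint_left]
  intro x hx hy
  simp only [Finset.mem_filter, Finset.mem_Icc, Finset.mem_Ioc] at hx hy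
  omega

lemma count_prefix (a b : ℝ) (M : ℕ) :
    ((Finset.Icc 1 (Psum M)).filter (fun n => eta n ∈ Set.Icc a b)).card
      = ∑ k ∈ Finset.range M, ((Finset.Icc 1 (Nat.nth Nat.Prime k - 1)).filter
          (fun i : ℕ => (i:ℝ)/(Nat.nth Nat.Prime k : ℝ) ∈ Set.Icc a b)).card := by
  induction M with
  | zero => simp [psum_zero]
  | succ M ih =>
    rw [count_split a b M (Psum (M+1)) (psum_mono (by omega)), ih,
      Finset.sum_range_succ, block_card_eq]

lemma main_est (a b : ℝ) (ha : 0 ≤ a) (hab : a ≤ b) (hb : b ≤ 1) (M N : ℕ)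
    (h1 : Psum M < N) (h2 : N ≤ Psum (M+1)) :
    |((((Finset.Icc 1 N).filter (fun n => eta n ∈ Set.Icc a b)).card : ℝ)) - (b-a)*N|
      ≤ 4*M + Nat.nth Nat.Prime M := by
  set B : ℕ → ℕ := fun k => ((Finset.Icc 1 (Nat.nth Nat.Prime k - 1)).filter
      (fun i : ℕ => (i:ℝ)/(Nat.nth Nat.Prime k : ℝ) ∈ Set.Icc a b)).card with hB
  set R : ℕ := ((Finset.Ioc (Psum M) N).filter (fun n => eta n ∈ Set.Icc a b)).card with hR
  have hsplit : ((Finset.Icc 1 N).filter (fun n => eta n ∈ Set.Icc a b)).card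
      = ∑ k ∈ Finset.range M, B k + R := by
    rw [count_split a b M N h1.le, count_prefix a b M]
  have hNsplit : N = Psum M + (N - Psum M) := by omega
  have hkey : ((((Finset.Icc 1 N).filter (fun n => eta n ∈ Set.Icc a b)).card : ℝ)) - (b-a)*N
      = (∑ k ∈ Finset.range M, ((B k : ℝ) - (b-a)*((Nat.nth Nat.Prime k - 1 : ℕ) : ℝ)))
        + ((R:ℝ) - (b-a)*((N - Psum M : ℕ) : ℝ)) := by
    have e1 : (N:ℝ) = ((Psum M : ℕ):ℝ) + ((N - Psum M : ℕ):ℝ) := by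
      exact_mod_cast congrArg (Nat.cast (R := ℝ)) hNsplit
    have e2 : ((Psum M : ℕ):ℝ) = ∑ k ∈ Finset.range M, ((Nat.nth Nat.Prime k - 1 : ℕ) : ℝ) := by
      rw [psum_eq_sum_range]
      push_cast
      rfl
    have e3 : ((((Finset.Icc 1 N).filter (fun n => eta n ∈ Set.Icc a b)).card : ℕ) : ℝ)
        = (∑ k ∈ Finset.range M, (B k : ℝ)) + (R : ℝ) := by
      rw [hsplit]
      push_cast
      rfl
    have e4 : ∑ k ∈ Finset.range M, ((B k : ℝ) - (b-a)*((Nat.nth Nat.Prime k - 1 : ℕ) : ℝ))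
        = (∑ k ∈ Finset.range M, (B k : ℝ))
          - (b-a) * ∑ k ∈ Finset.range M, ((Nat.nth Nat.Prime k - 1 : ℕ) : ℝ) := by
      rw [Finset.sum_sub_distrib, Finset.mul_sum]
    rw [e3, e1, e2, e4]
    ring
  rw [hkey]
  have hterm : ∀ k ∈ Finset.range M,
      |(B k : ℝ) - (b-a)*((Nat.nth Nat.Prime k - 1 : ℕ) : ℝ)| ≤ 4 := by
    intro k _
    have hp2 : 2 ≤ Nat.nth Nat.Prime k := by have := two_le_pr k; omega
    have hib : |(B k : ℝ) - (b-a)*(Nat.nth Nat.Prime k : ℝ)| ≤ 3 :=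
      interval_card_bound hp2 ha hab hb
    have hcast : ((Nat.nth Nat.Prime k - 1 : ℕ) : ℝ) = (Nat.nth Nat.Prime k : ℝ) - 1 := by
      have : 1 ≤ Nat.nth Nat.Prime k := by omega
      push_cast [Nat.cast_sub this]
      ring
    rw [hcast]
    have e : (B k : ℝ) - (b-a)*((Nat.nth Nat.Prime k : ℝ) - 1)
        = ((B k : ℝ) - (b-a)*(Nat.nth Nat.Prime k : ℝ)) + (b-a) := by ring
    rw [e]
    calc |((B k : ℝ) - (b-a)*(Nat.nth Nat.Prime k : ℝ)) + (b-a)|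
        ≤ |(B k : ℝ) - (b-a)*(Nat.nth Nat.Prime k : ℝ)| + |b-a| := abs_add_le _ _
      _ ≤ 3 + 1 := add_le_add hib
          (by rw [abs_of_nonneg (by linarith : (0:ℝ) ≤ b-a)]; linarith)
      _ ≤ 4 := by norm_num
  have hRbound : |(R:ℝ) - (b-a)*((N - Psum M : ℕ) : ℝ)| ≤ (Nat.nth Nat.Prime M : ℝ) := by
    have hRle : R ≤ N - Psum M := by
      rw [hR]
      calc ((Finset.Ioc (Psum M) N).filter (fun n => eta n ∈ Set.Icc a b)).card
          ≤ (Finset.Ioc (Psum M) N).card := Finset.card_filter_le _ _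
        _ = N - Psum M := Nat.card_Ioc _ _
    have hd : N - Psum M ≤ Nat.nth Nat.Prime M := by
      have := psum_succ M
      omega
    have h0R : (0:ℝ) ≤ (R:ℝ) := Nat.cast_nonneg _
    have hdr : (R:ℝ) ≤ ((N - Psum M : ℕ) : ℝ) := Nat.cast_le.mpr hRle
    have hdd : ((N - Psum M : ℕ) : ℝ) ≤ (Nat.nth Nat.Prime M : ℝ) := Nat.cast_le.mpr hd
    have hba : 0 ≤ (b-a) := by linarith
    have hba1 : (b-a) ≤ 1 := by linarith
    have h0d : (0:ℝ) ≤ ((N - Psum M : ℕ) : ℝ) := Nat.cast_nonneg _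
    rw [abs_le]
    constructor <;> nlinarith
  calc |(∑ k ∈ Finset.range M, ((B k : ℝ) - (b-a)*((Nat.nth Nat.Prime k - 1 : ℕ) : ℝ)))
        + ((R:ℝ) - (b-a)*((N - Psum M : ℕ) : ℝ))|
      ≤ |∑ k ∈ Finset.range M, ((B k : ℝ) - (b-a)*((Nat.nth Nat.Prime k - 1 : ℕ) : ℝ))|
        + |(R:ℝ) - (b-a)*((N - Psum M : ℕ) : ℝ)| := abs_add_le _ _
    _ ≤ (∑ k ∈ Finset.range M, |(B k : ℝ) - (b-a)*((Nat.nth Nat.Prime k - 1 : ℕ) : ℝ)|)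
        + (Nat.nth Nat.Prime M : ℝ) := add_le_add (Finset.abs_sum_le_sum_abs _ _) hRbound
    _ ≤ (∑ _k ∈ Finset.range M, (4:ℝ)) + (Nat.nth Nat.Prime M : ℝ) := by
        gcongr with k hk
        exact hterm k hk
    _ = 4*M + Nat.nth Nat.Prime M := by
        rw [Finset.sum_const, Finset.card_range]
        push_cast
        ring

noncomputable def gbnd (m : ℕ) : ℝ := (4*(m:ℝ) + (Nat.nth Nat.Prime m : ℝ)) * 2 / (m:ℝ)^2

lemma nat_sqrt_atTop : Tendsto Nat.sqrt atTop atTop := by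
  rw [tendsto_atTop_atTop]
  intro c
  exact ⟨c*c, fun m hm => Nat.le_sqrt.mpr hm⟩

lemma gbnd_tendsto : Tendsto gbnd atTop (nhds 0) := by
  have hu : Tendsto (fun m : ℕ => 24 / (Nat.sqrt m : ℝ)) atTop (nhds 0) := by
    have h1 : Tendsto (fun m : ℕ => ((Nat.sqrt m : ℕ) : ℝ)) atTop atTop :=
      tendsto_natCast_atTop_atTop.comp nat_sqrt_atTop
    have h2 := h1.inv_tendsto_atTop
    have h3 := h2.const_mul (24:ℝ)
    simp only [mul_zero] at h3
    simpa [div_eq_mul_inv] using h3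
  apply squeeze_zero' (g := fun m : ℕ => 24 / (Nat.sqrt m : ℝ))
  · filter_upwards [eventually_ge_atTop 1] with m hm
    have hx : (0:ℝ) < (m:ℝ) := by exact_mod_cast hm
    unfold gbnd
    positivity
  · filter_upwards [eventually_ge_atTop 16] with m hm
    set x : ℝ := (m:ℝ) with hxdef
    set y : ℝ := ((Nat.sqrt m : ℕ) : ℝ) with hydef
    have hy4 : (4:ℝ) ≤ y := by
      have h4 : 4 ≤ Nat.sqrt m := Nat.le_sqrt.mpr (by omega)
      rw [hydef]
      exact_mod_cast h4
    have hx16 : (16:ℝ) ≤ x := by rw [hxdef]; exact_mod_cast hm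
    have hx0 : (0:ℝ) < x := by linarith
    have hy0 : (0:ℝ) < y := by linarith
    have hyyx : y*y ≤ x := by
      rw [hydef, hxdef, ← Nat.cast_mul]
      exact Nat.cast_le.mpr (by nlinarith [Nat.sqrt_le' m])
    have hP : (Nat.nth Nat.Prime m : ℝ) ≤ 2*(x+1)*(y+4) := by
      have := nth_prime_le m
      have h := (Nat.cast_le (α := ℝ)).mpr this
      push_cast at h
      convert h using 2 <;> push_cast <;> ring
    have hnum : (4*x + (Nat.nth Nat.Prime m : ℝ)) * 2 ≤ 24*x*y := by nlinarith
    calc gbnd m = (4*x + (Nat.nth Nat.Prime m : ℝ)) * 2 / x^2 := rfl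
      _ ≤ 24*x*y / x^2 := by
          apply div_le_div_of_nonneg_right hnum (by positivity) |>.trans_eq rfl
      _ = 24*y/x := by field_simp
      _ ≤ 24*y/(y*y) := by
          apply div_le_div_of_nonneg_left (by positivity) (by positivity) hyyx
      _ = 24/y := by field_simp
  exact hu


/-- `η` is equidistributed in `[0,1]` -/
theorem eta_equidistributed :
    ∀ a b : ℝ, 0 ≤ a → a ≤ b → b ≤ 1 →
      Filter.Tendsto
        (fun N : ℕ =>
          (((Finset.Icc 1 N).filter (fun n => eta n ∈ Set.Icc a b)).card : ℝ) / (N : ℝ))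
        Filter.atTop (nhds (b - a)) := by
  intro a b ha hab hb
  set F : ℕ → ℝ := fun N =>
    (((Finset.Icc 1 N).filter (fun n => eta n ∈ Set.Icc a b)).card : ℝ) / (N : ℝ) with hF
  set Mf : ℕ → ℕ := fun N => Nat.find (exists_le_psum N) with hMf
  have hM2 : ∀ N, N ≤ Psum (Mf N + 1) := fun N => Nat.find_spec (exists_le_psum N)
  have hM1 : ∀ N, 1 ≤ N → Psum (Mf N) < N := by
    intro N hN
    rcases Nat.eq_zero_or_pos (Mf N) with h0 | h0
    · rw [h0, psum_zero]; omega
    · have hmin := Nat.find_min (exists_le_psum N) (show Mf N - 1 < Mf N by omega)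
      have heq : Mf N - 1 + 1 = Mf N := by omega
      rw [heq] at hmin
      omega
  have hMtend : Tendsto Mf atTop atTop := by
    rw [tendsto_atTop_atTop]
    intro c
    refine ⟨Psum (c+1) + 1, fun N hN => ?_⟩
    by_contra hlt
    push_neg at hlt
    have h1 : Psum (Mf N + 1) ≤ Psum (c+1) := psum_mono (by omega)
    have h2 := hM2 N
    omega
  have habs : ∀ᶠ N in atTop, |F N - (b-a)| ≤ gbnd (Mf N) := by
    filter_upwards [eventually_ge_atTop 2] with N hN
    have hN1 : Psum (Mf N) < N := hM1 N (by omega)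
    have hN2 : N ≤ Psum (Mf N + 1) := hM2 N
    have hMpos : 1 ≤ Mf N := by
      by_contra h0
      push_neg at h0
      have h : Mf N = 0 := by omega
      rw [h] at hN2
      have hps1 : Psum 1 = 1 := by
        have hp := psum_succ 0
        have h2 : Nat.nth Nat.Prime 0 = 2 := Nat.nth_prime_zero_eq_two
        rw [psum_zero, h2] at hp
        simpa using hp
      norm_num [hps1] at hN2
      omega
    have hest := main_est a b ha hab hb (Mf N) N hN1 hN2
    have hNpos : (0:ℝ) < (N:ℝ) := by
      have : 0 < N := by omega
      exact_mod_cast this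
    have hFdiff : F N - (b-a)
        = (((((Finset.Icc 1 N).filter (fun n => eta n ∈ Set.Icc a b)).card : ℝ)) - (b-a)*N) / N := by
      rw [hF]
      field_simp
    rw [hFdiff, abs_div, abs_of_pos hNpos]
    set c : ℝ := |((((Finset.Icc 1 N).filter (fun n => eta n ∈ Set.Icc a b)).card : ℝ)) - (b-a)*N|
    have hc0 : 0 ≤ c := abs_nonneg _
    have hMsq : ((Mf N : ℝ))^2 / 2 ≤ (N:ℝ) := by
      have h1 : Mf N * Mf N ≤ 2 * Psum (Mf N) := sq_le_two_psum (Mf N)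
      have h2 : Mf N * Mf N ≤ 2 * N := by omega
      have h3 : ((Mf N * Mf N : ℕ) : ℝ) ≤ ((2*N : ℕ):ℝ) := Nat.cast_le.mpr h2
      push_cast at h3
      nlinarith
    have hM2pos : (0:ℝ) < ((Mf N : ℝ))^2 / 2 := by
      have : (1:ℝ) ≤ (Mf N : ℝ) := by exact_mod_cast hMpos
      positivity
    calc c / N ≤ c / (((Mf N : ℝ))^2 / 2) := by
          apply div_le_div_of_nonneg_left hc0 hM2pos hMsq
      _ ≤ (4*(Mf N : ℝ) + (Nat.nth Nat.Prime (Mf N) : ℝ)) / (((Mf N : ℝ))^2 / 2) := by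
          apply (div_le_div_iff_of_pos_right hM2pos).mpr
          calc c ≤ 4*(Mf N) + Nat.nth Nat.Prime (Mf N) := hest
            _ = 4*(Mf N : ℝ) + (Nat.nth Nat.Prime (Mf N) : ℝ) := by push_cast; ring
      _ = gbnd (Mf N) := by
          unfold gbnd
          field_simp
  have hzero : Tendsto (fun N => |F N - (b-a)|) atTop (nhds 0) :=
    squeeze_zero' (Eventually.of_forall fun N => abs_nonneg _) habs (gbnd_tendsto.comp hMtend)
  have hdiff : Tendsto (fun N => F N - (b-a)) atTop (nhds 0) :=
    (tendsto_zero_iff_abs_tendsto_zero (fun N => F N - (b-a))).mpr hzero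
  have := hdiff.add (tendsto_const_nhds (x := b - a))
  simp only [sub_add_cancel, zero_add] at this
  exact this
end

section
/- For each m ∈ ℕ let p_m denote the m-th prime number, and let ζ_{p_m} be the finite sequence (1/p_m, 2/p_m, ..., (p_m−1)/p_m) with elements ordered increasingly. Then (1/m) · max_{1 ≤ k ≤ p_m − 1} k · D_k*(ζ_{p_m}) ≥ (ln m)/8 · (1 + o(1)) as m → ∞; in particular this quantity tends to infinity as m → ∞. -/
open Filter Finset
open scoped BigOperators Classical

/-- The block `ζ_p`: the finite sequence `j/p` for `j = 1, …, p−1`, ordered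
increasingly (indexed from 1). -/
noncomputable def zetaBlock (p : ℕ) : ℕ → ℝ := fun j => (j : ℝ) / (p : ℝ)

/-- `maxKDzeta p = max_{1 ≤ k ≤ p−1} k · D_k*(ζ_p)`. -/
noncomputable def maxKDzeta (p : ℕ) : ℝ :=
  sSup {x : ℝ | ∃ k : ℕ, 1 ≤ k ∧ k ≤ p - 1 ∧ x = (k : ℝ) * starDisc (zetaBlock p) k}

lemma starCount_le (ξ : ℕ → ℝ) (N : ℕ) (r : ℝ) : starCount ξ N r ≤ N := by
  calc starCount ξ N r ≤ (Finset.Icc 1 N).card := Finset.card_filter_le _ _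
  _ = N := by rw [Nat.card_Icc]; omega
lemma starDisc_set_bdd (ξ : ℕ → ℝ) (N : ℕ) :
    ∀ d ∈ {d : ℝ | ∃ r : ℝ, 0 < r ∧ r ≤ 1 ∧ d = |(starCount ξ N r : ℝ) / (N : ℝ) - r|},
      d ≤ 1 := by
  rintro d ⟨r, hr0, hr1, rfl⟩
  have h1 : (0:ℝ) ≤ (starCount ξ N r : ℝ) / N := by positivity
  have h2 : (starCount ξ N r : ℝ) / N ≤ 1 := by
    rcases Nat.eq_zero_or_pos N with h | h
    · subst h; simp
    · rw [div_le_one (by exact_mod_cast h)]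
      exact_mod_cast starCount_le ξ N r
  rw [abs_le]; constructor <;> linarith
lemma starDisc_le_one (ξ : ℕ → ℝ) (N : ℕ) : starDisc ξ N ≤ 1 :=
  csSup_le ⟨_, ⟨1, one_pos, le_rfl, rfl⟩⟩ (starDisc_set_bdd ξ N)
lemma starDisc_nonneg (ξ : ℕ → ℝ) (N : ℕ) : 0 ≤ starDisc ξ N :=
  le_trans (abs_nonneg _) (le_csSup ⟨1, starDisc_set_bdd ξ N⟩ ⟨1, one_pos, le_rfl, rfl⟩)
lemma starCount_zeta (p k : ℕ) (hp : 0 < p) (hkp : k ≤ p) :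
    starCount (zetaBlock p) k ((k:ℝ)/p) = k := by
  have hp' : (0:ℝ) < p := by exact_mod_cast hp
  unfold starCount
  rw [Finset.filter_true_of_mem, Nat.card_Icc]
  · omega
  · intro n hn
    simp only [Finset.mem_Icc] at hn
    simp only [zetaBlock, Set.mem_Icc]
    refine ⟨by positivity, ?_⟩
    rw [div_le_div_iff_of_pos_right hp']
    exact_mod_cast hn.2

lemma le_starDisc (p k : ℕ) (hp : 0 < p) (hk1 : 1 ≤ k) (hkp : k ≤ p) :
    1 - (k:ℝ)/p ≤ starDisc (zetaBlock p) k := by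
  have hp' : (0:ℝ) < p := by exact_mod_cast hp
  have hk' : (0:ℝ) < k := by exact_mod_cast hk1
  apply le_csSup ⟨1, starDisc_set_bdd _ _⟩
  refine ⟨(k:ℝ)/p, by positivity, ?_, ?_⟩
  · rw [div_le_one hp']; exact_mod_cast hkp
  · rw [starCount_zeta p k hp hkp, div_self (ne_of_gt hk'), abs_of_nonneg]
    rw [sub_nonneg, div_le_one hp']; exact_mod_cast hkp
lemma le_maxKDzeta (p k : ℕ) (hp : 0 < p) (h1 : 1 ≤ k) (h2 : k ≤ p - 1) :
    (k:ℝ) * (1 - (k:ℝ)/p) ≤ maxKDzeta p := by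
  have hb : BddAbove {x : ℝ | ∃ k : ℕ, 1 ≤ k ∧ k ≤ p - 1 ∧
      x = (k : ℝ) * starDisc (zetaBlock p) k} := by
    refine ⟨p, ?_⟩
    rintro x ⟨k', h1', h2', rfl⟩
    have hle := starDisc_le_one (zetaBlock p) k'
    have hd0 := starDisc_nonneg (zetaBlock p) k'
    have hk'p : (k':ℝ) ≤ p := by
      have : k' ≤ p := le_trans h2' (Nat.sub_le p 1)
      exact_mod_cast this
    calc (k':ℝ) * starDisc (zetaBlock p) k' ≤ (p:ℝ) * 1 :=
      mul_le_mul hk'p hle hd0 (by positivity)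
    _ = p := mul_one _
  have hmem : (k:ℝ) * starDisc (zetaBlock p) k ∈ {x : ℝ | ∃ k : ℕ, 1 ≤ k ∧ k ≤ p - 1 ∧
      x = (k : ℝ) * starDisc (zetaBlock p) k} := ⟨k, h1, h2, rfl⟩
  refine le_trans ?_ (le_csSup hb hmem)
  have := le_starDisc p k hp h1 (le_trans h2 (Nat.sub_le p 1))
  have hk0 : (0:ℝ) ≤ k := by positivity
  exact mul_le_mul_of_nonneg_left this hk0
lemma maxKDzeta_ge (p : ℕ) (hp : p.Prime) (h3 : 3 ≤ p) :
    ((p:ℝ) - 1) / 4 ≤ maxKDzeta p := by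
  obtain ⟨k, hk⟩ := hp.odd_of_ne_two (by omega)
  have hk1 : 1 ≤ k := by omega
  have h2 : k ≤ p - 1 := by omega
  refine le_trans ?_ (le_maxKDzeta p k (by omega) hk1 h2)
  have hK : (1:ℝ) ≤ (k:ℝ) := by exact_mod_cast hk1
  have hpk : (p:ℝ) = 2*k+1 := by exact_mod_cast hk
  have h0 : (0:ℝ) < 2*(k:ℝ)+1 := by linarith
  rw [hpk]
  have e : 1 - (k:ℝ)/(2*(k:ℝ)+1) = ((k:ℝ)+1)/(2*(k:ℝ)+1) := by field_simp; ring
  rw [e, mul_div_assoc']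
  rw [div_le_div_iff₀ (by norm_num) h0]
  nlinarith [hK]
lemma chebyshev (N : ℕ) (hN : 2 ≤ N) :
    ((Nat.count Nat.Prime (N+1) : ℝ)) ≤
      (N:ℝ) ^ ((9:ℝ)/10) + 1 + 10 * Real.log 4 * N / (9 * Real.log N) := by
  classical
  rw [Nat.count_eq_card_filter_range]
  set F := (Finset.range (N+1)).filter Nat.Prime with hF
  set S := F.filter (fun q => q ^ 10 ≤ N ^ 9) with hSdef
  set T := F.filter (fun q => ¬ q ^ 10 ≤ N ^ 9) with hTdef
  have hcard : S.card + T.card = F.card := Finset.card_filter_add_card_filter_not _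
  have hN1 : (1:ℝ) < N := by exact_mod_cast hN
  have hlogN : 0 < Real.log N := Real.log_pos hN1
  -- bound on T
  have hTprod : ∏ q ∈ T, q ≤ 4 ^ N := by
    calc ∏ q ∈ T, q ≤ ∏ q ∈ F, q :=
        Finset.prod_le_prod_of_subset_of_one_le' (Finset.filter_subset _ _)
          (fun i hi _ => (Finset.mem_filter.mp hi).2.one_lt.le)
      _ = primorial N := rfl
      _ ≤ 4 ^ N := primorial_le_4_pow N
  have hTpow : (N ^ 9) ^ T.card ≤ 4 ^ (10 * N) := by
    calc (N ^ 9) ^ T.card = ∏ _q ∈ T, N ^ 9 := (Finset.prod_const _).symm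
      _ ≤ ∏ q ∈ T, q ^ 10 := Finset.prod_le_prod' (fun q hq =>
          le_of_lt (lt_of_not_ge (Finset.mem_filter.mp hq).2))
      _ = (∏ q ∈ T, q) ^ 10 := by rw [← Finset.prod_pow]
      _ ≤ (4 ^ N) ^ 10 := Nat.pow_le_pow_left hTprod 10
      _ = 4 ^ (10 * N) := by rw [← pow_mul, mul_comm]
  have hT : (T.card : ℝ) ≤ 10 * Real.log 4 * N / (9 * Real.log N) := by
    have hcast : (((N:ℝ) ^ 9) ^ T.card) ≤ (4:ℝ) ^ (10 * N) := by exact_mod_cast hTpow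
    have hlog := Real.log_le_log (by positivity) hcast
    rw [Real.log_pow, Real.log_pow, Real.log_pow] at hlog
    rw [le_div_iff₀ (by positivity)]
    push_cast at hlog ⊢
    nlinarith [hlog]
  -- bound on S
  have hS : (S.card : ℝ) ≤ (N:ℝ) ^ ((9:ℝ)/10) + 1 := by
    have ha : (0:ℝ) ≤ (N:ℝ) ^ ((9:ℝ)/10) := Real.rpow_nonneg (Nat.cast_nonneg N) _
    have hsub : S ⊆ Finset.range (⌊(N:ℝ) ^ ((9:ℝ)/10)⌋₊ + 1) := by
      intro q hq
      rw [Finset.mem_range, Nat.lt_succ_iff]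
      apply Nat.le_floor
      have hq10 : (q:ℝ) ^ 10 ≤ (N:ℝ) ^ 9 := by exact_mod_cast (Finset.mem_filter.mp hq).2
      by_contra hgt
      push_neg at hgt
      have h10 : ((N:ℝ) ^ ((9:ℝ)/10)) ^ (10:ℕ) < (q:ℝ) ^ (10:ℕ) :=
        pow_lt_pow_left₀ hgt ha (by norm_num)
      have heq : ((N:ℝ) ^ ((9:ℝ)/10)) ^ (10:ℕ) = (N:ℝ) ^ (9:ℕ) := by
        rw [← Real.rpow_natCast ((N:ℝ) ^ ((9:ℝ)/10)) 10, ← Real.rpow_mul (Nat.cast_nonneg N),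
          ← Real.rpow_natCast (N:ℝ) 9]
        norm_num
      rw [heq] at h10
      linarith
    have hcardS := Finset.card_le_card hsub
    rw [Finset.card_range] at hcardS
    have hfloor : (⌊(N:ℝ) ^ ((9:ℝ)/10)⌋₊ : ℝ) ≤ (N:ℝ) ^ ((9:ℝ)/10) := Nat.floor_le ha
    calc (S.card : ℝ) ≤ ((⌊(N:ℝ) ^ ((9:ℝ)/10)⌋₊ + 1 : ℕ) : ℝ) := by exact_mod_cast hcardS
      _ ≤ (N:ℝ) ^ ((9:ℝ)/10) + 1 := by push_cast; linarith
  have hFc : (F.card : ℝ) = S.card + T.card := by exact_mod_cast hcard.symm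
  rw [hFc]
  linarith

lemma eventually_linear :
    ∀ᶠ x : ℝ in atTop,
      (x ^ ((9:ℝ)/10) + 1) * Real.log x + 2 ≤ (2 - 10 * Real.log 4 / 9) * x := by
  have hc : 10 * Real.log 4 / 9 < 2 := by
    have h4 : Real.log 4 = 2 * Real.log 2 := by
      rw [show (4:ℝ) = 2^2 by norm_num, Real.log_pow]; push_cast; ring
    nlinarith [Real.log_two_lt_d9]
  have h1 : (fun x : ℝ => x ^ ((9:ℝ)/10) * Real.log x) =o[atTop] (id : ℝ → ℝ) := by
    have h := (Asymptotics.isBigO_refl (fun x : ℝ => x ^ ((9:ℝ)/10)) atTop).mul_isLittleO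
      (isLittleO_log_rpow_atTop (by norm_num : (0:ℝ) < 1/10))
    refine h.congr' (Filter.EventuallyEq.refl _ _) ?_
    filter_upwards [eventually_gt_atTop (0:ℝ)] with x hx
    rw [← Real.rpow_add hx]
    norm_num
  have h2 := Real.isLittleO_log_id_atTop
  have h3 := Asymptotics.isLittleO_const_id_atTop (2:ℝ)
  have h := (h1.add h2).add h3
  have h' : (fun x : ℝ => (x ^ ((9:ℝ)/10) + 1) * Real.log x + 2) =o[atTop] (id : ℝ → ℝ) := by
    refine h.congr' ?_ (Filter.EventuallyEq.refl _ _)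
    filter_upwards with x
    ring
  have hb := h'.bound (show (0:ℝ) < 2 - 10 * Real.log 4 / 9 by linarith)
  filter_upwards [hb, eventually_ge_atTop (0:ℝ)] with x hx hx0
  have := le_trans (le_abs_self _) hx
  rwa [Real.norm_eq_abs, id_eq, abs_of_nonneg hx0] at this
lemma nthPrime_large :
    ∀ᶠ m : ℕ in atTop, (m:ℝ) * Real.log m / 2 + 1 ≤ (nthPrime m : ℝ) := by
  have hmono : ∀ m : ℕ, m + 1 ≤ nthPrime m := by
    intro m
    have := Nat.add_two_le_nth_prime (m - 1)
    unfold nthPrime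
    omega
  have hp_tend : Tendsto (fun m : ℕ => ((nthPrime m : ℕ) : ℝ)) atTop atTop := by
    apply tendsto_atTop_mono (fun m => ?_)
      (tendsto_natCast_atTop_atTop (R := ℝ))
    exact_mod_cast le_trans (Nat.le_succ m) (hmono m)
  have hE := hp_tend.eventually eventually_linear
  filter_upwards [hE, eventually_ge_atTop 2] with m hEm hm2
  set p := nthPrime m with hpdef
  have hpp : Nat.Prime p := Nat.prime_nth_prime _
  have hp3 : 3 ≤ p := by have := hmono m; omega
  have hm_eq : Nat.count Nat.Prime (p + 1) = m := by
    unfold nthPrime at hpdef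
    rw [hpdef, Nat.count_nth_succ_of_infinite Nat.infinite_setOf_prime]
    omega
  have hcheb := chebyshev p (by omega)
  rw [hm_eq] at hcheb
  have hmp : (m:ℝ) ≤ (p:ℝ) := by exact_mod_cast le_trans (Nat.le_succ m) (hmono m)
  have hm1 : (0:ℝ) < m := by exact_mod_cast (by omega : 0 < m)
  have hlm : Real.log m ≤ Real.log p := Real.log_le_log hm1 hmp
  have hlp : 0 < Real.log p := Real.log_pos (by exact_mod_cast (by omega : 1 < p))
  set L := Real.log p with hL
  have expand : ((p:ℝ) ^ ((9:ℝ)/10) + 1 + 10 * Real.log 4 * p / (9 * L)) * L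
      = ((p:ℝ) ^ ((9:ℝ)/10) + 1) * L + 10 * Real.log 4 * p / 9 := by
    field_simp
  have step1 : (m:ℝ) * Real.log m ≤ (m:ℝ) * L :=
    mul_le_mul_of_nonneg_left hlm (by positivity)
  have step2 : (m:ℝ) * L ≤ ((p:ℝ) ^ ((9:ℝ)/10) + 1 + 10 * Real.log 4 * p / (9 * L)) * L :=
    mul_le_mul_of_nonneg_right hcheb hlp.le
  rw [expand] at step2
  have hlog4 : 0 < Real.log 4 := Real.log_pos (by norm_num)
  nlinarith [hEm, step1, step2]
lemma key_ineq : ∀ᶠ m : ℕ in atTop,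
    Real.log m / 8 ≤ maxKDzeta (nthPrime m) / (m : ℝ) := by
  filter_upwards [nthPrime_large, eventually_ge_atTop 2] with m hP hm2
  set p := nthPrime m with hpdef
  have hpp : Nat.Prime p := Nat.prime_nth_prime _
  have hp3 : 3 ≤ p := by
    have := Nat.add_two_le_nth_prime (m - 1)
    unfold nthPrime at hpdef
    omega
  have hmax := maxKDzeta_ge p hpp hp3
  have hm0 : (0:ℝ) < m := by exact_mod_cast (by omega : 0 < m)
  rw [div_le_div_iff₀ (by norm_num) hm0] at *
  calc Real.log m * m = ((m:ℝ) * Real.log m / 2 + 1 - 1) * 2 := by ring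
    _ ≤ ((p:ℝ) - 1) * 2 := by nlinarith [hP]
    _ ≤ maxKDzeta p * 8 := by nlinarith [hmax]

/-- `(1/m) · max_{1 ≤ k ≤ p_m−1} k · D_k*(ζ_{p_m}) ≥ (ln m)/8 · (1 + o(1))`
as `m → ∞`; in particular this quantity tends to infinity. -/
theorem maxKDzeta_growth :
    (∃ f : ℕ → ℝ, Filter.Tendsto f Filter.atTop (nhds 0) ∧
        ∀ᶠ m : ℕ in Filter.atTop,
          Real.log m / 8 * (1 + f m) ≤ maxKDzeta (nthPrime m) / (m : ℝ)) ∧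
      Filter.Tendsto (fun m : ℕ => maxKDzeta (nthPrime m) / (m : ℝ))
        Filter.atTop Filter.atTop := by
  constructor
  · refine ⟨fun _ => 0, tendsto_const_nhds, ?_⟩
    filter_upwards [key_ineq] with m h
    simpa using h
  · apply tendsto_atTop_mono' atTop key_ineq
    have hlog : Tendsto (fun m : ℕ => Real.log m) atTop atTop :=
      Real.tendsto_log_atTop.comp (tendsto_natCast_atTop_atTop (R := ℝ))
    exact hlog.atTop_div_const (by norm_num)
end

section
/- Let ω be the infinite sequence of rationals in [0,1] formed by concatenating, over the integers q = 2, 3, 4, ... in increasing order, the blocks 1/q, 2/q, ..., (q−1)/q. Then D_N*(ω) = O(1/√N), i.e. there exist an absolute constant C > 0 and N₀ ∈ ℕ such that for all N ≥ N₀, D_N*(ω) ≤ C/√N. -/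
open Filter Finset
open scoped BigOperators Classical

/-- The sequence `ω = (1/2, 1/3, 2/3, 1/4, 2/4, 3/4, 1/5, …)` (indexed from 1),
obtained by concatenating, over the integers `q ≥ 2` in increasing order, the blocks
`j/q` for `j = 1, …, q−1`.  The first `q(q−1)/2` terms consist of the blocks for
denominators `2, …, q`; for `n ≥ 1`, if `q` is minimal with `2 ≤ q` and
`n ≤ q(q−1)/2`, then `ω n = (n − (q−1)(q−2)/2)/q`. -/
noncomputable def omegaSeq (n : ℕ) : ℝ :=
  if h : ∃ q : ℕ, 2 ≤ q ∧ n ≤ q * (q - 1) / 2 then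
    ((n - (Nat.find h - 1) * (Nat.find h - 2) / 2 : ℕ) : ℝ) / (Nat.find h : ℝ)
  else 0

namespace OmegaAux

/-- Triangular numbers: `T q = 0 + 1 + ⋯ + (q-1) = q(q-1)/2`. -/
def T (q : ℕ) : ℕ := ∑ i ∈ Finset.range q, i

lemma T_eq (q : ℕ) : T q = q * (q - 1) / 2 := Finset.sum_range_id q

lemma two_T (q : ℕ) : 2 * T q = q * (q - 1) := by
  have := Finset.sum_range_id_mul_two q
  unfold T; omega

lemma T_succ (q : ℕ) : T (q + 1) = T q + q := Finset.sum_range_succ _ q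

lemma T_mono : Monotone T := by
  intro a b hab
  exact Finset.sum_le_sum_of_subset (Finset.range_subset_range.2 hab)

lemma omegaSeq_eq {q n : ℕ} (hq : 2 ≤ q) (h1 : T (q - 1) < n) (h2 : n ≤ T q) :
    omegaSeq n = ((n - T (q - 1) : ℕ) : ℝ) / (q : ℝ) := by
  have hex : ∃ q' : ℕ, 2 ≤ q' ∧ n ≤ q' * (q' - 1) / 2 := ⟨q, hq, by rw [← T_eq]; exact h2⟩
  have hfind : Nat.find hex = q := by
    rw [Nat.find_eq_iff]
    refine ⟨⟨hq, by rw [← T_eq]; exact h2⟩, ?_⟩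
    rintro m hm ⟨hm2, hmle⟩
    rw [← T_eq] at hmle
    have : T m ≤ T (q - 1) := T_mono (by omega)
    omega
  have hT : (q - 1) * (q - 2) / 2 = T (q - 1) := by
    have h12 : q - 1 - 1 = q - 2 := by omega
    rw [T_eq, h12]
  rw [omegaSeq, dif_pos hex]
  simp only [hfind, hT]

/-- Number of fractions `j/q`, `1 ≤ j ≤ q-1`, lying in `[0, r]`. -/
noncomputable def c (r : ℝ) (q : ℕ) : ℕ :=
  ((Finset.Icc 1 (q - 1)).filter (fun j : ℕ => (j : ℝ) ≤ r * q)).card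

lemma block_count (r : ℝ) (q : ℕ) (hq : 1 ≤ q) :
    ((Finset.Ioc (T q) (T (q + 1))).filter
        (fun n => omegaSeq n ∈ Set.Icc (0 : ℝ) r)).card = c r (q + 1) := by
  unfold c
  have hq1 : (q + 1 : ℕ) - 1 = q := by omega
  rw [hq1]
  apply Finset.card_bij' (i := fun n _ => n - T q) (j := fun j _ => j + T q)
  · intro n hn
    simp only [Finset.mem_Ioc, T_succ] at hn
    simp only [Finset.mem_filter, Finset.mem_Ioc] at hn ⊢
    obtain ⟨⟨hn1, hn2⟩, hcond⟩ := hn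
    have homega : omegaSeq n = ((n - T q : ℕ) : ℝ) / (q + 1 : ℝ) := by
      have := omegaSeq_eq (q := q + 1) (n := n) (by omega) (by simpa [hq1] using hn1)
        (by rw [T_succ]; omega)
      simpa [hq1] using this
    rw [homega] at hcond
    obtain ⟨_, hle⟩ := hcond
    refine ⟨Finset.mem_Icc.2 ⟨by omega, by omega⟩, ?_⟩
    rw [div_le_iff₀ (by positivity)] at hle
    calc ((n - T q : ℕ) : ℝ) ≤ r * (q + 1 : ℝ) := hle
      _ = r * ((q : ℕ) + 1 : ℝ) := by norm_num
      _ = r * ((q + 1 : ℕ) : ℝ) := by push_cast; ring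
  · intro j hj
    simp only [Finset.mem_filter, Finset.mem_Icc] at hj
    obtain ⟨⟨hj1, hj2⟩, hcond⟩ := hj
    simp only [Finset.mem_filter, Finset.mem_Ioc]
    have hmem1 : T q < j + T q := by omega
    have hmem2 : j + T q ≤ T (q + 1) := by rw [T_succ]; omega
    refine ⟨⟨hmem1, hmem2⟩, ?_⟩
    have homega : omegaSeq (j + T q) = ((j + T q - T q : ℕ) : ℝ) / (q + 1 : ℝ) := by
      have := omegaSeq_eq (q := q + 1) (n := j + T q) (by omega) (by simpa [hq1] using hmem1)
        hmem2
      simpa [hq1] using this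
    rw [homega]
    have hsub : j + T q - T q = j := by omega
    rw [hsub]
    constructor
    · positivity
    · rw [div_le_iff₀ (by positivity)]
      calc (j : ℝ) ≤ r * ((q + 1 : ℕ) : ℝ) := hcond
        _ = r * (q + 1 : ℝ) := by push_cast; ring
  · intro n hn
    simp only [Finset.mem_filter, Finset.mem_Ioc] at hn
    omega
  · intro j hj
    omega

lemma c_ub {r : ℝ} (hr0 : 0 ≤ r) (q : ℕ) : (c r q : ℝ) ≤ r * q := by
  have hsub : ((Finset.Icc 1 (q - 1)).filter (fun j : ℕ => (j : ℝ) ≤ r * q)) ⊆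
      Finset.Icc 1 (Nat.floor (r * q)) := by
    intro j hj
    simp only [Finset.mem_filter, Finset.mem_Icc] at hj ⊢
    exact ⟨hj.1.1, Nat.le_floor hj.2⟩
  have := Finset.card_le_card hsub
  rw [Nat.card_Icc] at this
  calc (c r q : ℝ) ≤ ((Nat.floor (r * q) + 1 - 1 : ℕ) : ℝ) := by exact_mod_cast this
    _ = (Nat.floor (r * q) : ℝ) := by norm_num
    _ ≤ r * q := Nat.floor_le (by positivity)

lemma c_lb {r : ℝ} (hr0 : 0 < r) (hr1 : r ≤ 1) {q : ℕ} (hq : 1 ≤ q) :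
    r * q - 2 ≤ (c r q : ℝ) := by
  set m := min (q - 1) (Nat.floor (r * q)) with hm
  have hsub : Finset.Icc 1 m ⊆
      ((Finset.Icc 1 (q - 1)).filter (fun j : ℕ => (j : ℝ) ≤ r * q)) := by
    intro j hj
    simp only [Finset.mem_Icc] at hj
    simp only [Finset.mem_filter, Finset.mem_Icc]
    refine ⟨⟨hj.1, le_trans hj.2 (min_le_left _ _)⟩, ?_⟩
    have hjf : j ≤ Nat.floor (r * q) := le_trans hj.2 (min_le_right _ _)
    calc (j : ℝ) ≤ (Nat.floor (r * q) : ℝ) := by exact_mod_cast hjf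
      _ ≤ r * q := Nat.floor_le (by positivity)
  have hcard := Finset.card_le_card hsub
  rw [Nat.card_Icc] at hcard
  have hmc : (m : ℝ) ≤ (c r q : ℝ) := by
    have : m ≤ c r q := by unfold c; omega
    exact_mod_cast this
  have h1 : r * q - 2 ≤ ((q - 1 : ℕ) : ℝ) := by
    have : ((q - 1 : ℕ) : ℝ) = (q : ℝ) - 1 := by
      have : (1 : ℕ) ≤ q := hq
      push_cast [this]; ring
    rw [this]
    have hq1 : (1 : ℝ) ≤ (q : ℝ) := by exact_mod_cast hq
    nlinarith
  have h2 : r * q - 2 ≤ (Nat.floor (r * q) : ℝ) := by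
    have := Nat.lt_floor_add_one (r * q)
    linarith
  have : r * q - 2 ≤ (m : ℝ) := by
    rw [hm]
    push_cast [Nat.cast_min]
    exact le_min h1 h2
  linarith

lemma starCount_Ioc (ξ : ℕ → ℝ) (N : ℕ) (r : ℝ) :
    starCount ξ N r = ((Finset.Ioc 0 N).filter (fun n => ξ n ∈ Set.Icc (0 : ℝ) r)).card := by
  unfold starCount
  rw [show Finset.Icc 1 N = Finset.Ioc 0 N from Finset.Icc_add_one_left_eq_Ioc 0 N]

lemma starCount_mono (ξ : ℕ → ℝ) (r : ℝ) {M N : ℕ} (h : M ≤ N) :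
    starCount ξ M r ≤ starCount ξ N r := by
  unfold starCount
  exact Finset.card_le_card (Finset.filter_subset_filter _ (Finset.Icc_subset_Icc_right h))

lemma starCount_T_succ (r : ℝ) {q : ℕ} (hq : 1 ≤ q) :
    starCount omegaSeq (T (q + 1)) r = starCount omegaSeq (T q) r + c r (q + 1) := by
  rw [starCount_Ioc, starCount_Ioc, ← block_count r q hq]
  rw [← Finset.Ioc_union_Ioc_eq_Ioc (Nat.zero_le (T q)) (T_mono (Nat.le_succ q))]
  rw [Finset.filter_union, Finset.card_union_of_disjoint]
  apply Finset.disjoint_filter_filter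
  rw [Finset.disjoint_left]
  intro a ha hb
  simp only [Finset.mem_Ioc] at ha hb
  omega

lemma T_bound {r : ℝ} (hr0 : 0 < r) (hr1 : r ≤ 1) :
    ∀ Q : ℕ, |(starCount omegaSeq (T Q) r : ℝ) - r * (T Q : ℝ)| ≤ 2 * Q := by
  intro Q
  induction Q with
  | zero => simp [starCount, T]
  | succ Q ih =>
    rcases Nat.eq_zero_or_pos Q with h0 | hQ
    · subst h0
      have hT1 : T 1 = 0 := by simp [T]
      rw [hT1]
      simp [starCount]
    · rw [starCount_T_succ r hQ]
      have hub := c_ub hr0.le (Q + 1)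
      have hlb := c_lb hr0 hr1 (show 1 ≤ Q + 1 by omega)
      have hT : ((T (Q + 1) : ℕ) : ℝ) = (T Q : ℝ) + (Q : ℝ) := by
        rw [T_succ]; push_cast; ring
      rw [abs_le] at ih ⊢
      push_cast [hT] at *
      constructor <;> [linarith; linarith]

lemma pointwise_aux {N Q : ℕ} (hN : 1 ≤ N) (hQ2 : 2 ≤ Q) (hNle : N ≤ T Q)
    (hlow : T (Q - 1) < N) {r : ℝ} (hr0 : 0 < r) (hr1 : r ≤ 1) :
    |(starCount omegaSeq N r : ℝ) / (N : ℝ) - r| ≤ 11 / Real.sqrt (N : ℝ) := by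
  have hTQ : T Q = T (Q - 1) + (Q - 1) := by
    have h1 : T (Q - 1 + 1) = T (Q - 1) + (Q - 1) := T_succ (Q - 1)
    rw [show Q - 1 + 1 = Q by omega] at h1
    omega
  have hbQ := T_bound hr0 hr1 Q
  have hbQ1 := T_bound hr0 hr1 (Q - 1)
  rw [abs_le] at hbQ hbQ1
  have hcastQ1 : (((Q - 1 : ℕ) : ℕ) : ℝ) = (Q : ℝ) - 1 := by
    push_cast [show 1 ≤ Q by omega]; ring
  rw [hcastQ1] at hbQ1
  have hmono1 : (starCount omegaSeq (T (Q - 1)) r : ℝ) ≤ (starCount omegaSeq N r : ℝ) := by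
    exact_mod_cast starCount_mono omegaSeq r (le_of_lt hlow)
  have hmono2 : (starCount omegaSeq N r : ℝ) ≤ (starCount omegaSeq (T Q) r : ℝ) := by
    exact_mod_cast starCount_mono omegaSeq r hNle
  have hcast1 : ((T (Q - 1) : ℕ) : ℝ) ≤ (N : ℝ) := by exact_mod_cast hlow.le
  have hcast2 : ((N : ℕ) : ℝ) ≤ ((T Q : ℕ) : ℝ) := by exact_mod_cast hNle
  have hQcast : (2 : ℝ) ≤ (Q : ℝ) := by exact_mod_cast hQ2
  have hdiff : ((T Q : ℕ) : ℝ) - ((T (Q - 1) : ℕ) : ℝ) = (Q : ℝ) - 1 := by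
    rw [hTQ]; push_cast [show 1 ≤ Q by omega]; ring
  have hmul : r * ((T Q : ℕ) : ℝ) - r * ((T (Q - 1) : ℕ) : ℝ) = r * ((Q : ℝ) - 1) := by
    rw [← mul_sub, hdiff]
  have hrd : r * ((Q : ℝ) - 1) ≤ (Q : ℝ) - 1 := by nlinarith
  have hrd0 : 0 ≤ r * ((Q : ℝ) - 1) := by nlinarith
  have hrT1 : r * ((T (Q - 1) : ℕ) : ℝ) ≤ r * (N : ℝ) :=
    mul_le_mul_of_nonneg_left hcast1 hr0.le
  have hrT2 : r * (N : ℝ) ≤ r * ((T Q : ℕ) : ℝ) :=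
    mul_le_mul_of_nonneg_left hcast2 hr0.le
  have key : |(starCount omegaSeq N r : ℝ) - r * (N : ℝ)| ≤ 3 * (Q : ℝ) := by
    rw [abs_le]
    constructor
    · linarith [hbQ1.1, hbQ.2]
    · linarith [hbQ.1, hbQ1.2]
  have hQnat : (Q - 2) * (Q - 2) ≤ 2 * N := by
    have h1 : (Q - 2) * (Q - 2) ≤ (Q - 1) * (Q - 2) := Nat.mul_le_mul_right _ (by omega)
    have h2 := two_T (Q - 1)
    rw [show Q - 1 - 1 = Q - 2 by omega] at h2
    omega
  have hsN : (0 : ℝ) < Real.sqrt (N : ℝ) := Real.sqrt_pos.2 (by exact_mod_cast hN)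
  have hs1 : (1 : ℝ) ≤ Real.sqrt (N : ℝ) := by
    have := Real.sqrt_le_sqrt (show (1 : ℝ) ≤ (N : ℝ) by exact_mod_cast hN)
    rwa [Real.sqrt_one] at this
  have hQsqrt : (Q : ℝ) ≤ Real.sqrt 2 * Real.sqrt (N : ℝ) + 2 := by
    have hc : (((Q - 2 : ℕ) : ℕ) : ℝ) ≤ Real.sqrt (2 * (N : ℝ)) := by
      rw [Real.le_sqrt (by positivity) (by positivity)]
      have h3 : (((Q - 2 : ℕ) * (Q - 2 : ℕ) : ℕ) : ℝ) ≤ ((2 * N : ℕ) : ℝ) := by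
        exact_mod_cast hQnat
      push_cast at h3
      nlinarith
    rw [Real.sqrt_mul (by norm_num)] at hc
    have h4 : (((Q - 2 : ℕ) : ℕ) : ℝ) = (Q : ℝ) - 2 := by
      push_cast [show 2 ≤ Q from hQ2]; ring
    rw [h4] at hc
    linarith
  have hs2 : Real.sqrt 2 ≤ 1.5 := by
    have h := Real.sqrt_le_sqrt (show (2:ℝ) ≤ 1.5 ^ 2 by norm_num)
    rwa [Real.sqrt_sq (by norm_num)] at h
  have hprod : Real.sqrt 2 * Real.sqrt (N : ℝ) ≤ 1.5 * Real.sqrt (N : ℝ) :=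
    mul_le_mul_of_nonneg_right hs2 hsN.le
  have key2 : |(starCount omegaSeq N r : ℝ) - r * (N : ℝ)| ≤ 11 * Real.sqrt (N : ℝ) := by
    have h3Q : 3 * (Q : ℝ) ≤ 11 * Real.sqrt (N : ℝ) := by linarith
    linarith
  have hNpos : (0 : ℝ) < (N : ℝ) := by exact_mod_cast hN
  have heq : (starCount omegaSeq N r : ℝ) / (N : ℝ) - r =
      ((starCount omegaSeq N r : ℝ) - r * (N : ℝ)) / (N : ℝ) := by field_simp
  rw [heq, abs_div, abs_of_pos hNpos, div_le_div_iff₀ hNpos hsN]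
  have hss : Real.sqrt (N : ℝ) * Real.sqrt (N : ℝ) = (N : ℝ) :=
    Real.mul_self_sqrt hNpos.le
  have hmul2 := mul_le_mul_of_nonneg_right key2 hsN.le
  have h5 : 11 * Real.sqrt (N : ℝ) * Real.sqrt (N : ℝ) = 11 * (N : ℝ) := by
    rw [mul_assoc, hss]
  linarith

lemma pointwise {N : ℕ} (hN : 1 ≤ N) {r : ℝ} (hr0 : 0 < r) (hr1 : r ≤ 1) :
    |(starCount omegaSeq N r : ℝ) / (N : ℝ) - r| ≤ 11 / Real.sqrt (N : ℝ) := by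
  have hex : ∃ q : ℕ, 2 ≤ q ∧ N ≤ T q := by
    refine ⟨N + 2, by omega, ?_⟩
    have h1 : T (N + 2) = T (N + 1) + (N + 1) := T_succ (N + 1)
    omega
  obtain ⟨hQ2, hNle⟩ := Nat.find_spec hex
  have hlow : T (Nat.find hex - 1) < N := by
    rcases eq_or_lt_of_le hQ2 with h2 | h3
    · have h0 : T (Nat.find hex - 1) = 0 := by
        rw [show Nat.find hex - 1 = 1 by omega]; simp [T]
      omega
    · have hmin := Nat.find_min hex (m := Nat.find hex - 1) (by omega)
      rw [not_and_or] at hmin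
      rcases hmin with h | h
      · omega
      · omega
  exact pointwise_aux hN hQ2 hNle hlow hr0 hr1

end OmegaAux

/-- `D_N*(ω) = O(1/√N)`: there exist an absolute constant `C > 0`
and `N₀ ∈ ℕ` such that for all `N ≥ N₀`, `D_N*(ω) ≤ C/√N`. -/
theorem omega_starDisc_isBigO :
    ∃ C : ℝ, 0 < C ∧ ∃ N₀ : ℕ, ∀ N : ℕ, N₀ ≤ N →
      starDisc omegaSeq N ≤ C / Real.sqrt (N : ℝ) := by
  refine ⟨11, by norm_num, 1, fun N hN => ?_⟩
  apply Real.sSup_le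
  · rintro d ⟨r, hr0, hr1, rfl⟩
    exact OmegaAux.pointwise hN hr0 hr1
  · positivity
end

section
/- Let ω be the infinite sequence of rationals in [0,1] formed by concatenating, over the integers q = 2, 3, 4, ... in increasing order, the blocks 1/q, 2/q, ..., (q−1)/q. Then the rate N^{-1/2} is sharp for ω: there exists an absolute constant c > 0 such that D_N*(ω) > c/√N for infinitely many natural numbers N. -/
open Filter Finset
open scoped BigOperators Classical

abbrev T (q : ℕ) : ℕ := q * (q - 1) / 2

lemma two_dvd_T (q : ℕ) : 2 ∣ q * (q - 1) := by
  cases q with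
  | zero => simp
  | succ k =>
    simpa [Nat.succ_sub_one, mul_comm] using (Nat.even_mul_succ_self k).two_dvd

lemma two_T (q : ℕ) : 2 * T q = q * (q - 1) :=
  Nat.mul_div_cancel' (two_dvd_T q)

lemma T_succ (k : ℕ) : T (k + 1) = T k + k := by
  have h3 : (k + 1) * ((k + 1) - 1) = k * (k - 1) + 2 * k := by
    cases k with
    | zero => simp
    | succ m => simp [Nat.succ_sub_one]; ring
  have h1 : 2 * T (k + 1) = 2 * (T k + k) := by
    rw [two_T, h3, Nat.mul_add, two_T]
  omega

lemma T_mono : Monotone T := by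
  apply monotone_nat_of_le_succ
  intro k
  rw [T_succ]
  omega

lemma T_ge (q : ℕ) : q - 1 ≤ T q := by
  cases q with
  | zero => simp
  | succ k => rw [T_succ]; omega

lemma omegaSeq_block {q n : ℕ} (hq : 2 ≤ q) (h1 : T (q - 1) < n) (h2 : n ≤ T q) :
    omegaSeq n = ((n - T (q - 1) : ℕ) : ℝ) / q := by
  have h : ∃ p : ℕ, 2 ≤ p ∧ n ≤ p * (p - 1) / 2 := ⟨q, hq, h2⟩
  have hfind : Nat.find h = q := by
    have hle : Nat.find h ≤ q := Nat.find_le ⟨hq, h2⟩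
    rcases lt_or_eq_of_le hle with hlt | he
    · exfalso
      have hspec := Nat.find_spec h
      have hmono : T (Nat.find h) ≤ T (q - 1) := T_mono (by omega)
      have : n ≤ T (q - 1) := le_trans hspec.2 hmono
      omega
    · exact he
  simp only [omegaSeq]
  rw [dif_pos h, hfind]
  have : (q - 1) * (q - 2) / 2 = T (q - 1) := by
    have : q - 2 = (q - 1) - 1 := by omega
    rw [this]
  rw [this]

lemma block_decomp {n : ℕ} (hn : 1 ≤ n) :
    ∃ Q j : ℕ, 2 ≤ Q ∧ 1 ≤ j ∧ j ≤ Q - 1 ∧ n = T (Q - 1) + j ∧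
      omegaSeq n = (j : ℝ) / Q := by
  have h : ∃ p : ℕ, 2 ≤ p ∧ n ≤ p * (p - 1) / 2 := by
    refine ⟨n + 2, by omega, ?_⟩
    show n ≤ T (n + 2)
    have := T_ge (n + 2)
    omega
  set Q := Nat.find h with hQ
  have hspec := Nat.find_spec h
  have hQ2 : 2 ≤ Q := hspec.1
  have hnQ : n ≤ T Q := hspec.2
  have h1 : T (Q - 1) < n := by
    rcases Nat.lt_or_ge Q 3 with h3 | h3
    · have : Q = 2 := by omega
      rw [this]
      exact Nat.lt_of_lt_of_le (by decide : T (2 - 1) < 1) hn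
    · have hmin := Nat.find_min h (m := Q - 1) (by omega)
      simp only [not_and, not_le] at hmin
      exact hmin (by omega)
  have hTsucc : T Q = T (Q - 1) + (Q - 1) := by
    have := T_succ (Q - 1)
    have hq : Q - 1 + 1 = Q := by omega
    rw [hq] at this
    exact this
  refine ⟨Q, n - T (Q - 1), hQ2, by omega, by omega, by omega, ?_⟩
  exact omegaSeq_block hQ2 h1 hnQ

lemma T_cast {q : ℕ} (hq : 1 ≤ q) : (T q : ℝ) = (q : ℝ) * ((q : ℝ) - 1) / 2 := by
  have h2T := two_T q
  have h : ((2 * T q : ℕ) : ℝ) = ((q * (q - 1) : ℕ) : ℝ) := by exact_mod_cast h2T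
  push_cast [Nat.cast_sub hq] at h
  linarith

lemma count_eq {q : ℕ} (hq : 2 ≤ q) :
    starCount omegaSeq (T q) (1 / (q : ℝ)) = 1 := by
  have hq0 : (0 : ℝ) < q := by exact_mod_cast Nat.lt_of_lt_of_le Nat.zero_lt_two hq
  have hTsucc : T q = T (q - 1) + (q - 1) := by
    have := T_succ (q - 1)
    have hqe : q - 1 + 1 = q := by omega
    rw [hqe] at this
    exact this
  have hset : ((Finset.Icc 1 (T q)).filter
      (fun n => omegaSeq n ∈ Set.Icc (0 : ℝ) (1 / (q : ℝ)))) = {T (q - 1) + 1} := by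
    ext n
    simp only [Finset.mem_filter, Finset.mem_Icc, Finset.mem_singleton, Set.mem_Icc]
    constructor
    · rintro ⟨⟨hn1, hn2⟩, _, hle⟩
      obtain ⟨Q, j, hQ2, hj1, hjQ, hnj, hval⟩ := block_decomp hn1
      have hQ0 : (0 : ℝ) < Q := by exact_mod_cast Nat.lt_of_lt_of_le Nat.zero_lt_two hQ2
      rw [hval] at hle
      have hjq : (j : ℝ) * q ≤ 1 * Q := (div_le_div_iff₀ hQ0 hq0).mp hle
      rw [one_mul] at hjq
      have hjqn : j * q ≤ Q := by exact_mod_cast hjq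
      -- Q ≤ q since T (Q-1) < n ≤ T q
      have hQq : Q ≤ q := by
        by_contra hc
        push_neg at hc
        have : T q ≤ T (Q - 1) := T_mono (by omega)
        omega
      have hqjq : q ≤ j * q := Nat.le_mul_of_pos_left q (by omega)
      have hQeq : Q = q := by omega
      have hj : j = 1 := by
        have : j * q ≤ 1 * q := by omega
        have := Nat.le_of_mul_le_mul_right this (by omega : 0 < q)
        omega
      rw [hQeq, hj] at hnj
      omega
    · intro hn
      subst hn
      have h1 : T (q - 1) < T (q - 1) + 1 := by omega
      have h2 : T (q - 1) + 1 ≤ T q := by omega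
      have hval := omegaSeq_block hq h1 h2
      have hsub : T (q - 1) + 1 - T (q - 1) = 1 := by omega
      rw [hsub] at hval
      refine ⟨⟨by omega, h2⟩, ?_, ?_⟩
      · rw [hval]; positivity
      · rw [hval]; norm_num
  rw [starCount, hset]
  simp

/-- The rate `N^{−1/2}` is sharp for `ω`: there is an absolute
constant `c > 0` such that `D_N*(ω) > c/√N` for infinitely many `N`. -/
theorem omega_starDisc_sharp :
    ∃ c : ℝ, 0 < c ∧ ∃ᶠ N : ℕ in Filter.atTop,
      c / Real.sqrt (N : ℝ) < starDisc omegaSeq N := by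
  refine ⟨1/10, by norm_num, ?_⟩
  rw [Filter.frequently_atTop]
  intro a
  set q : ℕ := a + 10 with hqdef
  have hq : 2 ≤ q := by omega
  set N : ℕ := T q with hNdef
  have hNa : a ≤ N := by
    have := T_ge q
    omega
  refine ⟨N, hNa, ?_⟩
  -- real versions
  set qr : ℝ := (q : ℝ) with hqr
  have hq10 : (10 : ℝ) ≤ qr := by
    rw [hqr]; exact_mod_cast (by omega : 10 ≤ q)
  have hq0 : (0 : ℝ) < qr := by linarith
  have hNr : (N : ℝ) = qr * (qr - 1) / 2 := by
    rw [hNdef, hqr]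
    exact T_cast (by omega)
  have hNpos : (0 : ℝ) < (N : ℝ) := by rw [hNr]; nlinarith
  have hNnat : 0 < N := by exact_mod_cast hNpos
  -- the candidate discrepancy value
  set d : ℝ := |(1 : ℝ) / (N : ℝ) - 1 / qr| with hd
  have hmem : d ∈ {d : ℝ | ∃ r : ℝ, 0 < r ∧ r ≤ 1 ∧
      d = |(starCount omegaSeq N r : ℝ) / (N : ℝ) - r|} := by
    refine ⟨1 / qr, by positivity, ?_, ?_⟩
    · rw [div_le_one hq0]; linarith
    · have hc : starCount omegaSeq N (1 / qr) = 1 := count_eq hq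
      rw [hc, hd]
      norm_num
  have hbdd : BddAbove {d : ℝ | ∃ r : ℝ, 0 < r ∧ r ≤ 1 ∧
      d = |(starCount omegaSeq N r : ℝ) / (N : ℝ) - r|} := by
    refine ⟨1, ?_⟩
    rintro x ⟨r, hr0, hr1, rfl⟩
    have hcard : starCount omegaSeq N r ≤ N := by
      calc starCount omegaSeq N r ≤ (Finset.Icc 1 N).card := Finset.card_filter_le _ _
        _ = N := by rw [Nat.card_Icc]; omega
    have h0 : (0 : ℝ) ≤ (starCount omegaSeq N r : ℝ) / (N : ℝ) := by positivity
    have h1 : (starCount omegaSeq N r : ℝ) / (N : ℝ) ≤ 1 := by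
      rw [div_le_one hNpos]; exact_mod_cast hcard
    rw [abs_le]
    constructor <;> linarith
  have hsup : d ≤ starDisc omegaSeq N := le_csSup hbdd hmem
  have hdge : 1 / qr - 1 / (N : ℝ) ≤ d := by
    rw [hd]
    have := neg_le_abs ((1 : ℝ) / (N : ℝ) - 1 / qr)
    linarith
  -- the sqrt bound
  set x : ℝ := Real.sqrt (N : ℝ) with hx
  have hx0 : 0 < x := Real.sqrt_pos.mpr hNpos
  have hx2 : x * x = (N : ℝ) := Real.mul_self_sqrt (le_of_lt hNpos)
  have h7 : 7 * (qr - 1) ≤ 10 * x := by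
    nlinarith [hx2, hNr, hx0.le, sq_nonneg (10 * x - 7 * (qr - 1))]
  have hkey : 1 / 10 / x < 1 / qr - 1 / (N : ℝ) := by
    have e1 : (1 : ℝ) / 10 / x = 1 / (10 * x) := by
      rw [div_div]
    have e2 : (1 : ℝ) / (10 * x) ≤ 1 / (7 * (qr - 1)) := by
      apply one_div_le_one_div_of_le
      · nlinarith
      · exact h7
    have e3 : (1 : ℝ) / (7 * (qr - 1)) < 1 / qr - 1 / (N : ℝ) := by
      rw [← sub_pos]
      have hne1 : qr ≠ 0 := ne_of_gt hq0
      have hne2 : qr - 1 ≠ 0 := by intro hc; nlinarith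
      have e : 1 / qr - 1 / (N : ℝ) - 1 / (7 * (qr - 1))
          = (6 * qr - 21) / (7 * qr * (qr - 1)) := by
        rw [hNr]
        field_simp
        ring
      rw [e]
      apply div_pos
      · linarith
      · nlinarith
    rw [e1]
    linarith
  linarith
end
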